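/- (Rural Hospital Theorem) If η has strict priorities and the vacancy function 𝒱 is weakly decreasing in its first argument, then for any two (η, 𝒱)-stable outcomes (M, I, A) and (M̃, Ĩ, Ã): for each h ∈ H₀, ∫ M_h(θ) dη(θ) = ∫ M̃_h(θ) dη(θ), and for η-almost every θ ∈ Θ, Σ_{h ≻^θ ∅} M_h(θ) = Σ_{h ≻^θ ∅} M̃_h(θ). -/

import Mathlib

open MeasureTheory Filter
open scoped Classical ENNReal

noncomputable section

/-- A student type: a complete (linear) order on `Option H` (`none` is the outside option `∅`),
together with a priority score in `[0,1]` at each school. -/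
abbrev Student (H : Type*) := LinearOrder (Option H) × (H → unitInterval)

instance (H : Type*) : MeasurableSpace (LinearOrder (Option H)) := ⊤
instance (H : Type*) : TopologicalSpace (LinearOrder (Option H)) := ⊥

/-- `Prefers θ a b` : student `θ` strictly prefers option `a` to option `b`. -/
def Prefers {H : Type*} (θ : Student H) (a b : Option H) : Prop := θ.1.lt b a

/-- Priority of `θ` at option `h` (junk value `1` at the outside option). -/
def priOf {H : Type*} (θ : Student H) : Option H → unitInterval := fun o => o.elim 1 θ.2

abbrev MatchingFun (H : Type*) := Student H → Option H → ℝ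
abbrev InterestFun (H : Type*) := H → unitInterval → ℝ
abbrev AdmissionsFun (H : Type*) := Option H → unitInterval → ℝ

section Defs
variable {H : Type*} [Fintype H]

/-- `M` maps each student to a probability distribution over `Option H`. -/
def IsMatchingFun (M : MatchingFun H) : Prop :=
  ∀ θ : Student H, (∀ h, 0 ≤ M θ h) ∧ ∑ h : Option H, M θ h = 1

/-- Interest functions are componentwise weakly decreasing and nonnegative. -/
def IsInterestFun (I : InterestFun H) : Prop :=
  ∀ h, Antitone (I h) ∧ ∀ p, 0 ≤ I h p

/-- Admissions functions are componentwise weakly increasing with values in `[0,1]`,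
and everyone is always admitted to the outside option. -/
def IsAdmissionsFun (A : AdmissionsFun H) : Prop :=
  (∀ h, Monotone (A h) ∧ ∀ p, A h p ∈ Set.Icc (0:ℝ) 1) ∧ ∀ p, A none p = 1

/-- The interest function `𝓘(M)` of a matching `M`. -/
def interestOf (η : Measure (Student H)) (M : MatchingFun H) : InterestFun H :=
  fun h p => ∫ θ, (if p ≤ θ.2 h then (1:ℝ) else 0) *
    (1 - ∑ h' ∈ Finset.univ.filter (fun h' : Option H => Prefers θ h' (some h)), M θ h') ∂η

/-- The admissions function `𝓐(I)` of an interest function `I`, given a vacancy function `V`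
and capacities `C`. -/
def admissionsOf (V : ℝ → ℕ → ℝ) (C : H → ℕ) (I : InterestFun H) : AdmissionsFun H :=
  fun h p => h.elim 1 fun h0 => V (I h0 p) (C h0)

/-- The matching `𝓜(A)` of an admissions function `A`. -/
def matchingOf (A : AdmissionsFun H) : MatchingFun H := fun θ h =>
  A h (priOf θ h) *
    ∏ h' ∈ Finset.univ.filter (fun h' : Option H => Prefers θ h' h), (1 - A h' (priOf θ h'))

/-- A matching `M` is `(η, V)`-stable if `M = 𝓜(𝓐(𝓘(M)))`. -/
def StableMatching (η : Measure (Student H)) (V : ℝ → ℕ → ℝ) (C : H → ℕ)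
    (M : MatchingFun H) : Prop :=
  IsMatchingFun M ∧ M = matchingOf (admissionsOf V C (interestOf η M))

/-- An interest function `I` is `(η, V)`-stable if `I = 𝓘(𝓜(𝓐(I)))`. -/
def StableInterest (η : Measure (Student H)) (V : ℝ → ℕ → ℝ) (C : H → ℕ)
    (I : InterestFun H) : Prop :=
  IsInterestFun I ∧ I = interestOf η (matchingOf (admissionsOf V C I))

/-- An admissions function `A` is `(η, V)`-stable if `A = 𝓐(𝓘(𝓜(A)))`. -/
def StableAdmissions (η : Measure (Student H)) (V : ℝ → ℕ → ℝ) (C : H → ℕ)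
    (A : AdmissionsFun H) : Prop :=
  IsAdmissionsFun A ∧ A = admissionsOf V C (interestOf η (matchingOf A))

/-- An outcome `(M, I, A)` is `(η, V)`-stable. -/
def StableOutcome (η : Measure (Student H)) (V : ℝ → ℕ → ℝ) (C : H → ℕ)
    (M : MatchingFun H) (I : InterestFun H) (A : AdmissionsFun H) : Prop :=
  IsMatchingFun M ∧ IsInterestFun I ∧ IsAdmissionsFun A ∧
  M = matchingOf A ∧ I = interestOf η M ∧ A = admissionsOf V C I

/-- The deterministic vacancy function `V^det(λ, C) = 1(λ < C)`. -/
def Vdet : ℝ → ℕ → ℝ := fun lam C => if lam < (C : ℝ) then 1 else 0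

/-- The Poisson vacancy function `V^pois(λ, C) = Σ_{k<C} e^{-λ} λ^k / k!`. -/
def Vpois : ℝ → ℕ → ℝ := fun lam C =>
  ∑ k ∈ Finset.range C, Real.exp (-lam) * lam ^ k / (Nat.factorial k : ℝ)

/-- A measure `η` on student types has strict priorities. -/
def StrictPriorities (η : Measure (Student H)) : Prop :=
  ∀ (h : H) (p : unitInterval), η {θ : Student H | Prefers θ (some h) none ∧ θ.2 h = p} = 0

end Defs

/-! Stability of `A` is the fixed-point equation `A = 𝓐(𝓘(𝓜(A)))` for an operator that is
monotone because `V` is decreasing, so by Knaster–Tarski there is a greatest stable admissions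
function `B`, and it suffices to compare a stable `A ≤ B` with `B`. Raising admission
probabilities lowers the mass `m_h` of students still interested in school `h`. Strict priorities
make the priority at `h` of these students atomless, so by the probability integral transform `h`
enrolls `∫_{(0, m_h]} V(t, C_h) dt` students: every school, and also the outside option, enrolls
weakly fewer students under `B`. Both enrollment vectors add up to `η(Θ)`, hence they agree, and
the pointwise inequality between the probabilities of staying unmatched becomes an
almost-everywhere equality. -/

section Tail

open Set Topology

variable (ν : Measure ℝ) [IsFiniteMeasure ν]

lemma antitone_measureReal_Ici : Antitone fun p => ν.real (Ici p) :=
  fun _ _ hpq => measureReal_mono (Ici_subset_Ici.mpr hpq)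

lemma abs_measureReal_Ici_sub_le (x y : ℝ) :
    |ν.real (Ici y) - ν.real (Ici x)| ≤ ν.real (Icc (x - |y - x|) (x + |y - x|)) := by
  rcases le_total x y with hxy | hyx
  · rw [abs_sub_comm, ← measureReal_sdiff (Ici_subset_Ici.mpr hxy) measurableSet_Ici,
      Ici_sdiff_Ici, abs_of_nonneg measureReal_nonneg]
    exact measureReal_mono fun t ht =>
      ⟨by linarith [ht.1, abs_nonneg (y - x)], by linarith [ht.2, le_abs_self (y - x)]⟩
  · rw [← measureReal_sdiff (Ici_subset_Ici.mpr hyx) measurableSet_Ici, Ici_sdiff_Ici,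
      abs_of_nonneg measureReal_nonneg]
    exact measureReal_mono fun t ht =>
      ⟨by linarith [ht.1, neg_le_abs (y - x)], by linarith [ht.2, abs_nonneg (y - x)]⟩

lemma continuous_measureReal_Ici [NullSingletonClass ν] :
    Continuous fun p => ν.real (Ici p) := by
  refine continuous_iff_continuousAt.mpr fun x => tendsto_iff_dist_tendsto_zero.mpr ?_
  have hδ : Tendsto (fun y => |y - x|) (𝓝 x) (𝓝 0) := by
    simpa using ((continuous_id.sub continuous_const).abs.tendsto x :
      Tendsto (fun y => |y - x|) (𝓝 x) (𝓝 |x - x|))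
  have hIcc : Tendsto (fun y => ν.real (Icc (x - |y - x|) (x + |y - x|))) (𝓝 x) (𝓝 0) :=
    (ENNReal.tendsto_toReal ENNReal.zero_ne_top).comp ((tendsto_measure_Icc ν x).comp hδ)
  exact squeeze_zero (fun _ => dist_nonneg)
    (fun y => (Real.dist_eq _ _).trans_le (abs_measureReal_Ici_sub_le ν x y)) hIcc

lemma tendsto_measureReal_Ici_atBot :
    Tendsto (fun p => ν.real (Ici p)) atBot (𝓝 (ν.real univ)) :=
  (ENNReal.tendsto_toReal (measure_ne_top ν univ)).comp (tendsto_measure_Ici_atBot ν)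

lemma tendsto_measureReal_Ici_atTop : Tendsto (fun p => ν.real (Ici p)) atTop (𝓝 0) := by
  have h := tendsto_measure_iInter_atTop (μ := ν) (fun _ => measurableSet_Ici.nullMeasurableSet)
    (fun _ _ hpq => Ici_subset_Ici.mpr hpq) ⟨0, measure_ne_top ν _⟩
  have hempty : ⋂ p : ℝ, Ici p = ∅ :=
    eq_empty_iff_forall_notMem.mpr fun x hx => (lt_add_one x).not_ge (mem_iInter.mp hx (x + 1))
  rw [hempty, measure_empty] at h
  exact (ENNReal.tendsto_toReal ENNReal.zero_ne_top).comp h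

/-- The sublevel set `{p | ν [p, ∞) ≤ c}` is empty, everything, or a closed half-line `[q, ∞)`
with `ν [q, ∞) = c` by continuity. -/
lemma measure_setOf_measureReal_Ici_le [NullSingletonClass ν] (c : ℝ) :
    ν {p | ν.real (Ici p) ≤ c} = ENNReal.ofReal (min c (ν.real univ)) := by
  set U := {p | ν.real (Ici p) ≤ c}
  rcases U.eq_empty_or_nonempty with hU | hU
  · have hc : c ≤ 0 := ge_of_tendsto' (tendsto_measureReal_Ici_atTop ν) fun p =>
      (not_le.mp fun hp => hU.subset hp).le
    rw [hU, measure_empty, ENNReal.ofReal_eq_zero.mpr ((min_le_left _ _).trans hc)]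
  by_cases hbdd : BddBelow U
  · have hq : sInf U ∈ U :=
      (isClosed_le (continuous_measureReal_Ici ν) continuous_const).csInf_mem hU hbdd
    have hUq : U = Ici (sInf U) := Subset.antisymm (fun p hp => csInf_le hbdd hp)
      fun p hp => (antitone_measureReal_Ici ν hp).trans hq
    have hGq : ν.real (Ici (sInf U)) = c := by
      refine le_antisymm hq (ge_of_tendsto (x := 𝓝[<] sInf U)
        ((continuous_measureReal_Ici ν).continuousAt.mono_left nhdsWithin_le_nhds) ?_)
      filter_upwards [self_mem_nhdsWithin] with p (hp : p < sInf U)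
      exact (not_le.mp (notMem_of_lt_csInf (s := U) hp hbdd)).le
    rw [hUq, ← ofReal_measureReal, hGq, min_eq_left (hGq ▸ measureReal_mono (subset_univ _))]
  · have hUuniv : U = univ := eq_univ_of_forall fun p => by
      obtain ⟨u, hu, hup⟩ := not_bddBelow_iff.mp hbdd p
      exact (antitone_measureReal_Ici ν hup.le).trans hu
    have hm : ν.real univ ≤ c := le_of_tendsto' (tendsto_measureReal_Ici_atBot ν) fun p =>
      (hUuniv.symm ▸ mem_univ p : p ∈ U)
    rw [hUuniv, ← ofReal_measureReal, min_eq_right hm]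

theorem map_measureReal_Ici [NullSingletonClass ν] :
    ν.map (fun p => ν.real (Ici p)) = volume.restrict (Ioc 0 (ν.real univ)) := by
  refine Measure.ext_of_Iic _ _ fun c => ?_
  rw [Measure.map_apply (antitone_measureReal_Ici ν).measurable measurableSet_Iic,
    Measure.restrict_apply measurableSet_Iic, inter_comm, Ioc_inter_Iic, Real.volume_Ioc,
    sub_zero, min_comm]
  exact measure_setOf_measureReal_Ici_le ν c

theorem integral_comp_measureReal_Ici [NullSingletonClass ν] {W : ℝ → ℝ} (hW : Measurable W) :
    ∫ p, W (ν.real (Ici p)) ∂ν = ∫ t in Ioc 0 (ν.real univ), W t := by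
  rw [← map_measureReal_Ici, integral_map (antitone_measureReal_Ici ν).measurable.aemeasurable
    hW.aestronglyMeasurable]

end Tail

section Weighted

open Set

variable {Ω : Type*} [MeasurableSpace Ω] {μ : Measure Ω} {P D : Ω → ℝ}

/-- `integral_comp_measureReal_Ici` for the image under `P` of the measure with density `D`. -/
theorem integral_comp_setIntegral_Ici_mul (hP : Measurable P) (hD : Measurable D)
    (hD0 : 0 ≤ D) (hDi : Integrable D μ) (hatom : ∀ p, μ {ω | P ω = p ∧ D ω ≠ 0} = 0)
    {W : ℝ → ℝ} (hW : Measurable W) :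
    ∫ ω, W (∫ ω' in P ⁻¹' Ici (P ω), D ω' ∂μ) * D ω ∂μ = ∫ t in Ioc 0 (∫ ω, D ω ∂μ), W t := by
  set ν := (μ.withDensity fun ω => ENNReal.ofReal (D ω)).map P
  have hν : ∀ s, MeasurableSet s → ν s = ENNReal.ofReal (∫ ω in P ⁻¹' s, D ω ∂μ) :=
    fun s hs => by
      rw [Measure.map_apply hP hs, withDensity_apply _ (hP hs),
        ofReal_integral_eq_lintegral_ofReal hDi.integrableOn (ae_of_all _ hD0)]
  have : IsFiniteMeasure ν := ⟨by rw [hν univ MeasurableSet.univ]; exact ENNReal.ofReal_lt_top⟩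
  have : NullSingletonClass ν := ⟨fun p => by
    rw [Measure.map_apply hP (measurableSet_singleton p),
      withDensity_apply_eq_zero' hD.ennreal_ofReal.aemeasurable]
    refine measure_mono_null ?_ (hatom p)
    rintro ω ⟨hDω, hPω⟩
    exact ⟨hPω, fun h => hDω (by simp [h])⟩⟩
  have hνreal : ∀ s, MeasurableSet s → ν.real s = ∫ ω in P ⁻¹' s, D ω ∂μ := fun s hs => by
    rw [measureReal_def, hν s hs,
      ENNReal.toReal_ofReal (setIntegral_nonneg (hP hs) fun ω _ => hD0 ω)]
  have hWG : Measurable fun p => W (ν.real (Ici p)) :=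
    hW.comp (antitone_measureReal_Ici ν).measurable
  calc ∫ ω, W (∫ ω' in P ⁻¹' Ici (P ω), D ω' ∂μ) * D ω ∂μ
      = ∫ ω, (D ω).toNNReal • W (ν.real (Ici (P ω))) ∂μ := by
        refine integral_congr_ae (ae_of_all _ fun ω => ?_)
        dsimp only
        rw [hνreal _ measurableSet_Ici, NNReal.smul_def, Real.coe_toNNReal _ (hD0 ω), smul_eq_mul,
          mul_comm]
    _ = ∫ p, W (ν.real (Ici p)) ∂ν := by
        rw [integral_map hP.aemeasurable hWG.aestronglyMeasurable]
        exact (integral_withDensity_eq_integral_smul hD.real_toNNReal _).symm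
    _ = ∫ t in Ioc 0 (∫ ω, D ω ∂μ), W t := by
        rw [integral_comp_measureReal_Ici ν hW, hνreal univ MeasurableSet.univ, preimage_univ,
          setIntegral_univ]

end Weighted

section Matching

open Finset

variable {H : Type*} {A B : AdmissionsFun H} {θ : Student H}

lemma IsAdmissionsFun.monotone (hA : IsAdmissionsFun A) (h : Option H) : Monotone (A h) :=
  (hA.1 h).1

lemma IsAdmissionsFun.nonneg (hA : IsAdmissionsFun A) (h : Option H) (p : unitInterval) :
    0 ≤ A h p :=
  ((hA.1 h).2 p).1

lemma IsAdmissionsFun.le_one (hA : IsAdmissionsFun A) (h : Option H) (p : unitInterval) :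
    A h p ≤ 1 :=
  ((hA.1 h).2 p).2

lemma prefers_trans {a b c : Option H} (hab : Prefers θ a b) (hbc : Prefers θ b c) :
    Prefers θ a c :=
  @lt_trans _ θ.1.toPreorder _ _ _ hbc hab

lemma measurable_priority (h : H) : Measurable fun θ : Student H => θ.2 h :=
  (measurable_pi_apply h).comp measurable_snd

lemma measurableSet_priority_ge (h : H) (p : unitInterval) :
    MeasurableSet {θ : Student H | p ≤ θ.2 h} :=
  measurableSet_le measurable_const (measurable_priority h)

lemma measurable_admission (hA : ∀ h, Monotone (A h)) (h : Option H) :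
    Measurable fun θ : Student H => A h (priOf θ h) := by
  cases h with
  | none => exact measurable_const (a := A none 1)
  | some h => exact (hA (some h)).measurable.comp (measurable_priority h)

variable [Fintype H]

def notAdmittedAbove (A : AdmissionsFun H) (h : Option H) (θ : Student H) : ℝ :=
  ∏ h' ∈ univ.filter (fun h' : Option H => Prefers θ h' h), (1 - A h' (priOf θ h'))

lemma matchingOf_apply (A : AdmissionsFun H) (θ : Student H) (h : Option H) :
    matchingOf A θ h = A h (priOf θ h) * notAdmittedAbove A h θ := rfl

lemma sum_matchingOf_of_upwardClosed (A : AdmissionsFun H) {s : Finset (Option H)}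
    (hs : ∀ a ∈ s, ∀ b, Prefers θ b a → b ∈ s) :
    ∑ h ∈ s, matchingOf A θ h = 1 - ∏ h ∈ s, (1 - A h (priOf θ h)) := by
  -- telescope along the reverse of `θ`'s ranking, in which `Prefers θ b a` reads `b < a`
  let _ : LinearOrder (Option H) := θ.1
  rw [show ∏ h ∈ s, (1 - A h (priOf θ h)) = _ from prod_one_sub_ordered (ι := (Option H)ᵒᵈ) s _,
    sub_sub_cancel]
  refine sum_congr rfl fun a ha => congrArg _ (prod_congr ?_ fun _ _ => rfl)
  ext b
  exact ⟨fun hb => mem_filter.mpr ⟨hs a ha b (mem_filter.mp hb).2, (mem_filter.mp hb).2⟩,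
    fun hb => mem_filter.mpr ⟨mem_univ b, (mem_filter.mp hb).2⟩⟩

lemma sum_matchingOf_prefers (A : AdmissionsFun H) (θ : Student H) (o : Option H) :
    ∑ h ∈ univ.filter (fun h : Option H => Prefers θ h o), matchingOf A θ h =
      1 - notAdmittedAbove A o θ :=
  sum_matchingOf_of_upwardClosed A fun _ ha _ hb =>
    mem_filter.mpr ⟨mem_univ _, prefers_trans hb (mem_filter.mp ha).2⟩

lemma sum_matchingOf (hA : ∀ p, A none p = 1) (θ : Student H) : ∑ h, matchingOf A θ h = 1 := by
  rw [sum_matchingOf_of_upwardClosed A fun _ _ _ _ => mem_univ _,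
    prod_eq_zero (mem_univ none) (by rw [priOf, hA, sub_self]), sub_zero]

lemma matchingOf_none (hA : ∀ p, A none p = 1) (θ : Student H) :
    matchingOf A θ none = notAdmittedAbove A none θ := by
  rw [matchingOf_apply, hA, one_mul]

lemma prefers_none_of_notAdmittedAbove_ne_zero (hA : ∀ p, A none p = 1) {h : H}
    (hD : notAdmittedAbove A (some h) θ ≠ 0) : Prefers θ (some h) none := by
  let _ : LinearOrder (Option H) := θ.1
  refine (lt_or_gt_of_ne (Option.some_ne_none h)).resolve_left fun hlt => hD ?_
  exact prod_eq_zero (mem_filter.mpr ⟨mem_univ none, hlt⟩) (by rw [priOf, hA, sub_self])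

lemma notAdmittedAbove_nonneg (hA : ∀ h p, A h p ≤ 1) (h : Option H) (θ : Student H) :
    0 ≤ notAdmittedAbove A h θ :=
  prod_nonneg fun h' _ => sub_nonneg.mpr (hA h' _)

lemma notAdmittedAbove_le_one (hA0 : ∀ h p, 0 ≤ A h p) (hA1 : ∀ h p, A h p ≤ 1) (h : Option H)
    (θ : Student H) : notAdmittedAbove A h θ ≤ 1 :=
  prod_le_one (fun h' _ => sub_nonneg.mpr (hA1 h' _)) fun h' _ => sub_le_self _ (hA0 h' _)

lemma notAdmittedAbove_anti (hB : ∀ h p, B h p ≤ 1) (hAB : A ≤ B) (h : Option H)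
    (θ : Student H) : notAdmittedAbove B h θ ≤ notAdmittedAbove A h θ :=
  prod_le_prod (fun h' _ => sub_nonneg.mpr (hB h' _)) fun h' _ => sub_le_sub_left (hAB h' _) _

lemma measurable_notAdmittedAbove (hA : ∀ h, Monotone (A h)) (h : Option H) :
    Measurable (notAdmittedAbove A h) := by
  unfold notAdmittedAbove
  simp_rw [prod_filter]
  refine Finset.measurable_prod _ fun h' _ => Measurable.ite ?_
    (measurable_const.sub (measurable_admission hA h')) measurable_const
  exact measurable_fst
    (MeasurableSpace.measurableSet_top (s := {r : LinearOrder (Option H) | r.lt h h'}))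

end Matching

section Interest

open Set

variable {H : Type*} [Fintype H] (η : Measure (Student H)) {A B : AdmissionsFun H}

lemma interestOf_matchingOf (A : AdmissionsFun H) (h : H) (p : unitInterval) :
    interestOf η (matchingOf A) h p =
      ∫ θ in {θ | p ≤ θ.2 h}, notAdmittedAbove A (some h) θ ∂η := by
  rw [← integral_indicator (measurableSet_priority_ge h p)]
  refine integral_congr_ae (ae_of_all _ fun θ => ?_)
  simp only [sum_matchingOf_prefers, sub_sub_cancel, indicator_apply, mem_ofPred_eq, ite_mul,
    one_mul, zero_mul]

lemma integrable_notAdmittedAbove [IsFiniteMeasure η] (hA : IsAdmissionsFun A) (h : Option H) :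
    Integrable (notAdmittedAbove A h) η := by
  refine .of_bound (measurable_notAdmittedAbove hA.monotone h).aestronglyMeasurable 1
    (ae_of_all _ fun θ => ?_)
  rw [Real.norm_of_nonneg (notAdmittedAbove_nonneg hA.le_one h θ)]
  exact notAdmittedAbove_le_one hA.nonneg hA.le_one h θ

lemma integrable_matchingOf [IsFiniteMeasure η] (hA : IsAdmissionsFun A) (h : Option H) :
    Integrable (fun θ => matchingOf A θ h) η := by
  refine (integrable_notAdmittedAbove η hA h).bdd_mul
    (measurable_admission hA.monotone h).aestronglyMeasurable (c := 1)
    (ae_of_all _ fun θ => ?_)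
  rw [Real.norm_of_nonneg (hA.nonneg h _)]
  exact hA.le_one h _

lemma interestOf_nonneg (hA : ∀ h p, A h p ≤ 1) (h : H) (p : unitInterval) :
    0 ≤ interestOf η (matchingOf A) h p := by
  rw [interestOf_matchingOf]
  exact setIntegral_nonneg (measurableSet_priority_ge h p) fun θ _ =>
    notAdmittedAbove_nonneg hA _ θ

lemma antitone_interestOf [IsFiniteMeasure η] (hA : IsAdmissionsFun A) (h : H) :
    Antitone (interestOf η (matchingOf A) h) := fun p q hpq => by
  simp only [interestOf_matchingOf]
  exact setIntegral_mono_set (integrable_notAdmittedAbove η hA _).integrableOn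
    (ae_of_all _ fun θ => notAdmittedAbove_nonneg hA.le_one _ θ)
    (Eventually.of_forall fun θ (hθ : q ≤ θ.2 h) => (hpq.trans hθ : p ≤ θ.2 h))

lemma interestOf_anti [IsFiniteMeasure η] (hA : IsAdmissionsFun A) (hB : IsAdmissionsFun B)
    (hAB : A ≤ B) (h : H) (p : unitInterval) :
    interestOf η (matchingOf B) h p ≤ interestOf η (matchingOf A) h p := by
  simp only [interestOf_matchingOf]
  exact setIntegral_mono (integrable_notAdmittedAbove η hB _).integrableOn
    (integrable_notAdmittedAbove η hA _).integrableOn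
    fun θ => notAdmittedAbove_anti hB.le_one hAB _ θ

end Interest

section Stable

open Set

variable {H : Type*} [Fintype H] {V : ℝ → ℕ → ℝ} {C : H → ℕ} {η : Measure (Student H)}
  {A B : AdmissionsFun H}

lemma StableAdmissions.apply_some (hA : StableAdmissions η V C A) (h : H) (p : unitInterval) :
    A (some h) p = V (interestOf η (matchingOf A) h p) (C h) :=
  congrFun (congrFun hA.2 (some h)) p

theorem StableAdmissions.integral_matchingOf_some [IsFiniteMeasure η]
    (hVmono : ∀ (c : ℕ) (x y : ℝ), 0 ≤ x → x ≤ y → V y c ≤ V x c) (hη : StrictPriorities η)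
    (hA : StableAdmissions η V C A) (h : H) :
    ∫ θ, matchingOf A θ (some h) ∂η =
      ∫ t in Ioc 0 (∫ θ, notAdmittedAbove A (some h) θ ∂η), V t (C h) := by
  set P : Student H → ℝ := fun θ => θ.2 h
  set D := notAdmittedAbove A (some h)
  -- `V` is only decreasing on `[0, ∞)`; clamped, it becomes antitone and hence measurable
  have hW : Antitone fun t => V (max t 0) (C h) := fun s t hst =>
    hVmono _ _ _ (le_max_right _ _) (max_le_max_right 0 hst)
  have hatom : ∀ p, η {θ | P θ = p ∧ D θ ≠ 0} = 0 := fun p => by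
    by_cases hp : p ∈ Icc (0 : ℝ) 1
    · refine measure_mono_null (fun θ hθ => ?_) (hη h ⟨p, hp⟩)
      exact ⟨prefers_none_of_notAdmittedAbove_ne_zero hA.1.2 hθ.2, Subtype.ext hθ.1⟩
    · exact measure_mono_null (fun θ hθ => absurd (hθ.1 ▸ (θ.2 h).2) hp) measure_empty
  have hM : ∀ θ, matchingOf A θ (some h) =
      V (max (∫ θ' in P ⁻¹' Ici (P θ), D θ' ∂η) 0) (C h) * D θ := fun θ => by
    have hI : interestOf η (matchingOf A) h (priOf θ (some h)) =
        ∫ θ' in P ⁻¹' Ici (P θ), D θ' ∂η := interestOf_matchingOf η A h _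
    rw [matchingOf_apply, hA.apply_some, hI,
      max_eq_left (hI ▸ interestOf_nonneg η hA.1.le_one h _)]
  refine (integral_congr_ae (ae_of_all _ hM)).trans ((integral_comp_setIntegral_Ici_mul
    (measurable_subtype_coe.comp (measurable_priority h))
    (measurable_notAdmittedAbove hA.1.monotone _)
    (notAdmittedAbove_nonneg hA.1.le_one _)
    (integrable_notAdmittedAbove η hA.1 _) hatom hW.measurable).trans ?_)
  exact setIntegral_congr_fun measurableSet_Ioc fun t ht => by simp only [max_eq_left ht.1.le]

lemma integrableOn_Ioc_of_antitone (hVmono : ∀ (c : ℕ) (x y : ℝ), 0 ≤ x → x ≤ y → V y c ≤ V x c)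
    (c : ℕ) (m : ℝ) : IntegrableOn (fun t => V t c) (Ioc 0 m) :=
  (AntitoneOn.integrableOn_isCompact isCompact_Icc fun _ hx _ _ hxy =>
    hVmono c _ _ hx.1 hxy).mono_set Ioc_subset_Icc_self

lemma integral_notAdmittedAbove_anti [IsFiniteMeasure η] (hA : IsAdmissionsFun A)
    (hB : IsAdmissionsFun B) (hAB : A ≤ B) (h : Option H) :
    ∫ θ, notAdmittedAbove B h θ ∂η ≤ ∫ θ, notAdmittedAbove A h θ ∂η :=
  integral_mono (integrable_notAdmittedAbove η hB h) (integrable_notAdmittedAbove η hA h)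
    fun θ => notAdmittedAbove_anti hB.le_one hAB h θ

theorem integral_matchingOf_le_of_le [IsFiniteMeasure η]
    (hVrange : ∀ (x : ℝ) (c : ℕ), 0 ≤ x → V x c ∈ Set.Icc (0:ℝ) 1)
    (hVmono : ∀ (c : ℕ) (x y : ℝ), 0 ≤ x → x ≤ y → V y c ≤ V x c) (hη : StrictPriorities η)
    (hA : StableAdmissions η V C A) (hB : StableAdmissions η V C B) (hAB : A ≤ B)
    (o : Option H) : ∫ θ, matchingOf B θ o ∂η ≤ ∫ θ, matchingOf A θ o ∂η := by
  cases o with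
  | none =>
    simp only [matchingOf_none hA.1.2, matchingOf_none hB.1.2]
    exact integral_notAdmittedAbove_anti hA.1 hB.1 hAB none
  | some h =>
    rw [hA.integral_matchingOf_some hVmono hη, hB.integral_matchingOf_some hVmono hη]
    exact setIntegral_mono_set (integrableOn_Ioc_of_antitone hVmono _ _)
      (ae_restrict_of_forall_mem measurableSet_Ioc fun t ht => (hVrange t _ ht.1.le).1)
      (Ioc_subset_Ioc_right (integral_notAdmittedAbove_anti hA.1 hB.1 hAB _)).eventuallyLE

lemma sum_integral_matchingOf [IsFiniteMeasure η] (hA : IsAdmissionsFun A) :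
    ∑ o, ∫ θ, matchingOf A θ o ∂η = η.real univ := by
  rw [← integral_finsetSum _ fun o _ => integrable_matchingOf η hA o]
  simp [sum_matchingOf hA.2]

theorem integral_matchingOf_eq_of_le [IsFiniteMeasure η]
    (hVrange : ∀ (x : ℝ) (c : ℕ), 0 ≤ x → V x c ∈ Set.Icc (0:ℝ) 1)
    (hVmono : ∀ (c : ℕ) (x y : ℝ), 0 ≤ x → x ≤ y → V y c ≤ V x c) (hη : StrictPriorities η)
    (hA : StableAdmissions η V C A) (hB : StableAdmissions η V C B) (hAB : A ≤ B)
    (o : Option H) : ∫ θ, matchingOf A θ o ∂η = ∫ θ, matchingOf B θ o ∂η := by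
  have hle := integral_matchingOf_le_of_le hVrange hVmono hη hA hB hAB
  have hsum : ∑ o, ∫ θ, matchingOf B θ o ∂η = ∑ o, ∫ θ, matchingOf A θ o ∂η := by
    rw [sum_integral_matchingOf hA.1, sum_integral_matchingOf hB.1]
  exact ((Finset.sum_eq_sum_iff_of_le fun o _ => hle o).mp hsum o (Finset.mem_univ o)).symm

theorem notAdmittedAbove_none_ae_eq_of_le [IsFiniteMeasure η]
    (hVrange : ∀ (x : ℝ) (c : ℕ), 0 ≤ x → V x c ∈ Set.Icc (0:ℝ) 1)
    (hVmono : ∀ (c : ℕ) (x y : ℝ), 0 ≤ x → x ≤ y → V y c ≤ V x c) (hη : StrictPriorities η)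
    (hA : StableAdmissions η V C A) (hB : StableAdmissions η V C B) (hAB : A ≤ B) :
    notAdmittedAbove A none =ᵐ[η] notAdmittedAbove B none := by
  have h := integral_matchingOf_eq_of_le hVrange hVmono hη hA hB hAB none
  simp only [matchingOf_none hA.1.2, matchingOf_none hB.1.2] at h
  refine ((integral_eq_iff_of_ae_le (integrable_notAdmittedAbove η hB.1 _)
    (integrable_notAdmittedAbove η hA.1 _) (ae_of_all _ fun θ => ?_)).mp h.symm).symm
  exact notAdmittedAbove_anti hB.1.le_one hAB none θ

end Stable

section Greatest

variable {H : Type*} {A : AdmissionsFun H}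

/-- Admissions functions are encoded by their (monotone) components at the schools, which form a
complete lattice; the outside option admits everyone. -/
def extendAdmissions (𝔄 : H → unitInterval →o unitInterval) : AdmissionsFun H :=
  fun o p => o.elim 1 fun h => 𝔄 h p

lemma isAdmissionsFun_extendAdmissions (𝔄 : H → unitInterval →o unitInterval) :
    IsAdmissionsFun (extendAdmissions 𝔄) := by
  refine ⟨fun o => ?_, fun _ => rfl⟩
  cases o with
  | none => exact ⟨monotone_const, fun _ => ⟨zero_le_one, le_rfl⟩⟩
  | some h => exact ⟨fun _ _ hpq => (𝔄 h).monotone hpq, fun p => (𝔄 h p).2⟩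

lemma extendAdmissions_mono : Monotone (extendAdmissions (H := H)) := fun _ _ h𝔄𝔅 o p => by
  cases o with
  | none => exact le_rfl
  | some h => exact h𝔄𝔅 h p

lemma extendAdmissions_injective : Function.Injective (extendAdmissions (H := H)) :=
  fun _ _ h𝔄𝔅 => funext fun h => OrderHom.ext _ _ <| funext fun p =>
    Subtype.ext (congrFun (congrFun h𝔄𝔅 (some h)) p)

def restrictAdmissions (A : AdmissionsFun H) (hA : IsAdmissionsFun A) :
    H → unitInterval →o unitInterval :=
  fun h => ⟨fun p => ⟨A (some h) p, hA.nonneg _ p, hA.le_one _ p⟩, fun _ _ hpq => hA.monotone _ hpq⟩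

lemma extendAdmissions_restrictAdmissions (hA : IsAdmissionsFun A) :
    extendAdmissions (restrictAdmissions A hA) = A := by
  funext o p
  cases o with
  | none => exact (hA.2 p).symm
  | some h => rfl

variable [Fintype H] {V : ℝ → ℕ → ℝ} {C : H → ℕ} {η : Measure (Student H)}

def admissionsUpdate (η : Measure (Student H)) [IsFiniteMeasure η] (V : ℝ → ℕ → ℝ) (C : H → ℕ)
    (hVrange : ∀ (x : ℝ) (c : ℕ), 0 ≤ x → V x c ∈ Set.Icc (0:ℝ) 1)
    (hVmono : ∀ (c : ℕ) (x y : ℝ), 0 ≤ x → x ≤ y → V y c ≤ V x c) :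
    (H → unitInterval →o unitInterval) →o (H → unitInterval →o unitInterval) where
  toFun 𝔄 h :=
    have hI := interestOf_nonneg η (isAdmissionsFun_extendAdmissions 𝔄).le_one
    ⟨fun p => ⟨V (interestOf η (matchingOf (extendAdmissions 𝔄)) h p) (C h),
      hVrange _ _ (hI h p)⟩,
      fun _ _ hpq => hVmono _ _ _ (hI h _)
        (antitone_interestOf η (isAdmissionsFun_extendAdmissions 𝔄) h hpq)⟩
  monotone' 𝔄 𝔅 h𝔄𝔅 h p :=
    hVmono _ _ _ (interestOf_nonneg η (isAdmissionsFun_extendAdmissions 𝔅).le_one h p)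
      (interestOf_anti η (isAdmissionsFun_extendAdmissions 𝔄) (isAdmissionsFun_extendAdmissions 𝔅)
        (extendAdmissions_mono h𝔄𝔅) h p)

lemma extendAdmissions_admissionsUpdate [IsFiniteMeasure η]
    (hVrange : ∀ (x : ℝ) (c : ℕ), 0 ≤ x → V x c ∈ Set.Icc (0:ℝ) 1)
    (hVmono : ∀ (c : ℕ) (x y : ℝ), 0 ≤ x → x ≤ y → V y c ≤ V x c)
    (𝔄 : H → unitInterval →o unitInterval) :
    extendAdmissions (admissionsUpdate η V C hVrange hVmono 𝔄) =
      admissionsOf V C (interestOf η (matchingOf (extendAdmissions 𝔄))) := by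
  funext o p
  cases o <;> rfl

theorem exists_greatest_stableAdmissions [IsFiniteMeasure η]
    (hVrange : ∀ (x : ℝ) (c : ℕ), 0 ≤ x → V x c ∈ Set.Icc (0:ℝ) 1)
    (hVmono : ∀ (c : ℕ) (x y : ℝ), 0 ≤ x → x ≤ y → V y c ≤ V x c) :
    ∃ B, StableAdmissions η V C B ∧ ∀ A, StableAdmissions η V C A → A ≤ B := by
  have hgfp := OrderHom.map_gfp (α := H → unitInterval →o unitInterval)
    (admissionsUpdate η V C hVrange hVmono)
  refine ⟨extendAdmissions (admissionsUpdate η V C hVrange hVmono).gfp,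
    ⟨isAdmissionsFun_extendAdmissions _, ?_⟩, fun A hA => ?_⟩
  · rw [← extendAdmissions_admissionsUpdate hVrange hVmono, hgfp]
  · have hfix : admissionsUpdate η V C hVrange hVmono (restrictAdmissions A hA.1) =
        restrictAdmissions A hA.1 := by
      apply extendAdmissions_injective
      rw [extendAdmissions_admissionsUpdate, extendAdmissions_restrictAdmissions]
      exact hA.2.symm
    rw [← extendAdmissions_restrictAdmissions hA.1]
    exact extendAdmissions_mono
      (OrderHom.le_gfp (α := H → unitInterval →o unitInterval) _ hfix.ge)

end Greatest

/-- **Rural Hospital Theorem.** If `η` has strict priorities and the vacancy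
function `V : ℝ₊ × ℕ → [0,1]` is weakly decreasing in its first argument, then the set of matched
agents is identical across `(η, V)`-stable outcomes: each school enrolls the same measure of
students, and `η`-almost every student has the same probability of being matched. -/
theorem stmt5 {H : Type*} [Fintype H] (V : ℝ → ℕ → ℝ)
    (hVrange : ∀ (x : ℝ) (c : ℕ), 0 ≤ x → V x c ∈ Set.Icc (0:ℝ) 1)
    (hVmono : ∀ (c : ℕ) (x y : ℝ), 0 ≤ x → x ≤ y → V y c ≤ V x c)
    (C : H → ℕ) (η : Measure (Student H)) [IsFiniteMeasure η]
    (hη : StrictPriorities η)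
    (M M' : MatchingFun H) (I I' : InterestFun H) (A A' : AdmissionsFun H)
    (h1 : StableOutcome η V C M I A) (h2 : StableOutcome η V C M' I' A') :
    (∀ h : Option H, ∫ θ, M θ h ∂η = ∫ θ, M' θ h ∂η) ∧
    (∀ᵐ θ ∂η,
      ∑ h ∈ Finset.univ.filter (fun h : Option H => Prefers θ h none), M θ h =
      ∑ h ∈ Finset.univ.filter (fun h : Option H => Prefers θ h none), M' θ h) := by
  obtain ⟨B, hB, hmax⟩ := exists_greatest_stableAdmissions (η := η) (C := C) hVrange hVmono
  obtain ⟨-, -, hA, rfl, rfl, hAI⟩ := h1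
  obtain ⟨-, -, hA', rfl, rfl, hAI'⟩ := h2
  have hsA : StableAdmissions η V C A := ⟨hA, hAI⟩
  have hsA' : StableAdmissions η V C A' := ⟨hA', hAI'⟩
  refine ⟨fun o => ?_, ?_⟩
  · rw [integral_matchingOf_eq_of_le hVrange hVmono hη hsA hB (hmax A hsA),
      integral_matchingOf_eq_of_le hVrange hVmono hη hsA' hB (hmax A' hsA')]
  · filter_upwards [notAdmittedAbove_none_ae_eq_of_le hVrange hVmono hη hsA hB (hmax A hsA),
      notAdmittedAbove_none_ae_eq_of_le hVrange hVmono hη hsA' hB (hmax A' hsA')] with θ hθ hθ'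
    rw [sum_matchingOf_prefers, sum_matchingOf_prefers, hθ, hθ']
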